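/- Let 𝔄 = (Q, Σ, δ, q₀, F) be a DFA with finite state set Q, and let Ã be its minimal DFA with transition functions δ̃_w. Then there exists a number t ≥ 0 such that the set {δ̃_w : w ∈ Σ*, |w| = t} contains a nontrivial group if and only if there exist words u, v ∈ Σ*, a reachable state q ∈ Q^r, and a number k with 1 ≤ k ≤ |Q| such that q ≁ δ_u(q), δ_{u^k}(q) = q, |v| = |u|, and δ_{u^i}(q) = δ_{u^i v}(q) for every i < k. -/
import Mathlib


/-- Extended transition function of a DFA: `run δ w q` is the state reached from `q`
after reading the word `w`. -/
def run {Q A : Type} (δ : Q → A → Q) (w : List A) (q : Q) : Q := w.foldl δ q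

/-- A state `q` is reachable from the initial state `q0`. -/
def Reach {Q A : Type} (δ : Q → A → Q) (q0 : Q) (q : Q) : Prop :=
  ∃ w : List A, run δ w q0 = q

/-- Myhill–Nerode style equivalence of states: `q ∼ q'` iff every word leads from `q`
into `F` exactly when it leads from `q'` into `F`. -/
def StEq {Q A : Type} (δ : Q → A → Q) (F : Set Q) (q q' : Q) : Prop :=
  ∀ w : List A, (run δ w q ∈ F ↔ run δ w q' ∈ F)

theorem run_append {Q A : Type} (δ : Q → A → Q) (w v : List A) (q : Q) :
    run δ (w ++ v) q = run δ v (run δ w q) := by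
  simp [run, List.foldl_append]

/-- The setoid of reachable states modulo `∼`. -/
def minSetoid {Q A : Type} (δ : Q → A → Q) (q0 : Q) (F : Set Q) :
    Setoid {q : Q // Reach δ q0 q} where
  r a b := StEq δ F a.1 b.1
  iseqv := ⟨fun _ _ => Iff.rfl, fun h w => (h w).symm, fun h1 h2 w => (h1 w).trans (h2 w)⟩

/-- The states of the minimal DFA: `∼`-classes of reachable states. -/
abbrev MinState {Q A : Type} (δ : Q → A → Q) (q0 : Q) (F : Set Q) :=
  Quotient (minSetoid δ q0 F)

theorem reach_run {Q A : Type} (δ : Q → A → Q) (q0 : Q) (q : Q)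
    (h : Reach δ q0 q) (w : List A) : Reach δ q0 (run δ w q) := by
  obtain ⟨w', hw'⟩ := h
  exact ⟨w' ++ w, by rw [run_append, hw']⟩

/-- The transition function `δ̃_w` of the minimal DFA. -/
def minDelta {Q A : Type} (δ : Q → A → Q) (q0 : Q) (F : Set Q) (w : List A) :
    MinState δ q0 F → MinState δ q0 F :=
  Quotient.map (fun a => ⟨run δ w a.1, reach_run δ q0 a.1 a.2 w⟩)
    (by
      intro a b h
      intro v
      show run δ v (run δ w a.1) ∈ F ↔ run δ v (run δ w b.1) ∈ F
      rw [← run_append, ← run_append]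
      exact h (w ++ v))

/-- `wpow u k` is the word `u^k`, i.e. `u` concatenated with itself `k` times. -/
def wpow {A : Type} (u : List A) (k : ℕ) : List A := (List.replicate k u).flatten

set_option linter.unusedSectionVars false

----------------- helpers ------------------

section Helpers
variable {Q A : Type} (δ : Q → A → Q) (q0 : Q) (F : Set Q)

theorem run_nil (q : Q) : run δ ([] : List A) q = q := rfl

theorem wpow_zero (u : List A) : wpow u 0 = [] := rfl

theorem wpow_succ (u : List A) (m : ℕ) : wpow u (m + 1) = wpow u m ++ u := by
  simp [wpow, List.replicate_succ']

theorem wpow_add (u : List A) (m n : ℕ) : wpow u (m + n) = wpow u m ++ wpow u n := by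
  rw [wpow, wpow, wpow, List.replicate_add, List.flatten_append]

theorem wpow_one (u : List A) : wpow u 1 = u := by simp [wpow]

theorem wpow_length (u : List A) (m : ℕ) : (wpow u m).length = m * u.length := by
  induction m with
  | zero => rw [wpow_zero]; simp
  | succ n ih => rw [wpow_succ, List.length_append, ih]; ring

theorem run_wpow (u : List A) (m : ℕ) : run δ (wpow u m) = (run δ u)^[m] := by
  induction m with
  | zero => rfl
  | succ n ih =>
    funext q
    rw [wpow_succ, run_append, ih, Function.iterate_succ_apply']

theorem minDelta_mk (w : List A) (a : {q : Q // Reach δ q0 q}) :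
    minDelta δ q0 F w ⟦a⟧ = ⟦⟨run δ w a.1, reach_run δ q0 a.1 a.2 w⟩⟧ := rfl

theorem minDelta_nil : minDelta δ q0 F ([] : List A) = id := by
  funext s
  induction s using Quotient.ind
  rfl

theorem minDelta_append (w w' : List A) :
    minDelta δ q0 F (w ++ w') = minDelta δ q0 F w' ∘ minDelta δ q0 F w := by
  funext s
  induction s using Quotient.ind with | _ a =>
  show Quotient.mk _ _ = Quotient.mk _ _
  simp only [minDelta_mk]
  congr 1
  exact Subtype.ext (run_append δ w w' a.1)

theorem minDelta_wpow (w : List A) (m : ℕ) :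
    minDelta δ q0 F (wpow w m) = (minDelta δ q0 F w)^[m] := by
  induction m with
  | zero => exact minDelta_nil δ q0 F
  | succ n ih => rw [wpow_succ, minDelta_append, ih, Function.iterate_succ']

theorem minDelta_congr (w w' : List A) (h : run δ w = run δ w') :
    minDelta δ q0 F w = minDelta δ q0 F w' := by
  funext s
  induction s using Quotient.ind with | _ a =>
  simp only [minDelta_mk]
  congr 1
  exact Subtype.ext (congrFun h a.1)

theorem stEq_run {q q' : Q} (h : StEq δ F q q') (w : List A) :
    StEq δ F (run δ w q) (run δ w q') := by
  intro w'
  have := h (w ++ w')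
  rwa [run_append, run_append] at this

/-- eventual periodicity extension -/
theorem iter_per {α : Type*} (f : α → α) (p c : ℕ) (h : f^[p + c] = f^[p]) :
    ∀ m, p ≤ m → f^[m + c] = f^[m] := by
  intro m hm
  obtain ⟨s, rfl⟩ := Nat.exists_eq_add_of_le hm
  calc f^[p + s + c] = f^[s] ∘ f^[p + c] := by rw [← Function.iterate_add]; ring_nf
    _ = f^[s] ∘ f^[p] := by rw [h]
    _ = f^[p + s] := by rw [← Function.iterate_add]; ring_nf

theorem iter_perd {α : Type*} (f : α → α) (p c : ℕ)
    (h : ∀ m, p ≤ m → f^[m + c] = f^[m]) :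
    ∀ d m, p ≤ m → f^[m + d * c] = f^[m] := by
  intro d
  induction d with
  | zero => simp
  | succ n ih =>
    intro m hm
    have : m + (n + 1) * c = (m + n * c) + c := by ring
    rw [this, h _ (le_trans hm (Nat.le_add_right _ _)), ih m hm]

theorem iter_eq_of_modeq {α : Type*} (f : α → α) (p c : ℕ)
    (h : ∀ m, p ≤ m → f^[m + c] = f^[m]) :
    ∀ m m', p ≤ m → m ≤ m' → m % c = m' % c → f^[m'] = f^[m] := by
  intro m m' hp hmm hmod
  have hdvd : c ∣ m' - m := (Nat.modEq_iff_dvd' hmm).mp hmod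
  obtain ⟨d, hd⟩ := hdvd
  have : m' = m + d * c := by rw [Nat.mul_comm] at hd; omega
  rw [this, iter_perd f p c h d m hp]

end Helpers

section SetPer
variable {A β : Type}

def lenSet (μ : List A → β) (j : ℕ) : Set β := {g | ∃ w : List A, w.length = j ∧ μ w = g}

theorem lenSet_shift_mem (μ : List A → β)
    (hc : ∀ (w₁ w₁' w₂ : List A), μ w₁ = μ w₁' → μ (w₁ ++ w₂) = μ (w₁' ++ w₂))
    (a b s : ℕ) (hab : lenSet μ a = lenSet μ b) (g : β)
    (hg : g ∈ lenSet μ (a + s)) : g ∈ lenSet μ (b + s) := by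
  obtain ⟨w, hlen, rfl⟩ := hg
  have h1 : (w.take a).length = a := by
    rw [List.length_take]; omega
  have h2 : (w.drop a).length = s := by
    rw [List.length_drop]; omega
  have hmem : μ (w.take a) ∈ lenSet μ b := by
    rw [← hab]; exact ⟨w.take a, h1, rfl⟩
  obtain ⟨w', hlen', hμ⟩ := hmem
  refine ⟨w' ++ w.drop a, by rw [List.length_append, hlen', h2], ?_⟩
  rw [hc w' (w.take a) (w.drop a) hμ, List.take_append_drop]

theorem lenSet_shift (μ : List A → β)
    (hc : ∀ (w₁ w₁' w₂ : List A), μ w₁ = μ w₁' → μ (w₁ ++ w₂) = μ (w₁' ++ w₂))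
    (a b s : ℕ) (hab : lenSet μ a = lenSet μ b) :
    lenSet μ (a + s) = lenSet μ (b + s) := by
  ext g
  exact ⟨lenSet_shift_mem μ hc a b s hab g, lenSet_shift_mem μ hc b a s hab.symm g⟩

theorem lenSet_good (μ : List A → β) [Finite β]
    (hc : ∀ (w₁ w₁' w₂ : List A), μ w₁ = μ w₁' → μ (w₁ ++ w₂) = μ (w₁' ++ w₂)) :
    ∃ T : ℕ, 0 < T ∧ ∀ (b : ℕ), 0 < b → ∀ m, 0 < m →
      lenSet μ (m * (T * b)) = lenSet μ (T * b) := by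
  obtain ⟨x, y, hxy, hfxy⟩ := Finite.exists_ne_map_eq_of_infinite (lenSet μ)
  -- order x < y wlog
  obtain ⟨a, b, hab, hfab⟩ : ∃ a b, a < b ∧ lenSet μ a = lenSet μ b := by
    rcases Nat.lt_or_ge x y with h | h
    · exact ⟨x, y, h, hfxy⟩
    · exact ⟨y, x, lt_of_le_of_ne h (Ne.symm hxy), hfxy.symm⟩
  set π := b - a with hπ
  have hπpos : 0 < π := by omega
  have step : ∀ j, a ≤ j → lenSet μ (j + π) = lenSet μ j := by
    intro j hj
    obtain ⟨s, rfl⟩ := Nat.exists_eq_add_of_le hj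
    have h1 : a + s + π = b + s := by omega
    rw [h1, add_comm a s, lenSet_shift μ hc b a s hfab.symm]
    ring_nf
  have stepd : ∀ d j, a ≤ j → lenSet μ (j + d * π) = lenSet μ j := by
    intro d
    induction d with
    | zero => simp
    | succ n ih =>
      intro j hj
      have h1 : j + (n + 1) * π = (j + n * π) + π := by ring
      rw [h1, step _ (le_trans hj (Nat.le_add_right _ _)), ih j hj]
  refine ⟨(a + 1) * π, by positivity, ?_⟩
  intro c hc' m hm
  obtain ⟨m', rfl⟩ : ∃ m', m = m' + 1 := ⟨m - 1, by omega⟩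
  set t := (a + 1) * π * c with ht
  have h1 : a ≤ t := by
    have u1 : a + 1 ≤ (a + 1) * π := Nat.le_mul_of_pos_right _ hπpos
    have u2 : (a + 1) * π ≤ (a + 1) * π * c := Nat.le_mul_of_pos_right _ hc'
    omega
  have h2 : (m' + 1) * t = t + (m' * (a + 1) * c) * π := by rw [ht]; ring
  rw [h2, stepd _ _ h1]

end SetPer

section Backward
variable {Q A : Type} [Fintype Q] [Fintype A]

theorem backward (δ : Q → A → Q) (q0 : Q) (F : Set Q)
    (u v : List A) (q : Q) (k : ℕ) (hreach : Reach δ q0 q) (hk1 : 1 ≤ k)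
    (hne : ¬ StEq δ F q (run δ u q)) (hcyc : run δ (wpow u k) q = q)
    (hlen : v.length = u.length)
    (hfix : ∀ i, i < k → run δ (wpow u i) q = run δ (wpow u i ++ v) q) :
    ∃ t : ℕ, ∃ (H : Type) (_ : Group H), Nontrivial H ∧
      ∃ φ : H → (MinState δ q0 F → MinState δ q0 F),
        Function.Injective φ ∧
        (∀ g h : H, φ (g * h) = φ g ∘ φ h) ∧
        (∀ g : H, ∃ w : List A, w.length = t ∧ φ g = minDelta δ q0 F w) := by
  classical
  have hkpos : 0 < k := hk1
  -- u is nonempty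
  have hu : 0 < u.length := by
    rcases Nat.eq_zero_or_pos u.length with h0 | h
    · exfalso
      have : u = [] := List.length_eq_zero_iff.mp h0
      subst this
      exact hne (fun w => Iff.rfl)
    · exact h
  set qseq : ℕ → Q := fun i => run δ (wpow u i) q with hqseq
  have rq : ∀ i, Reach δ q0 (qseq i) := fun i => reach_run δ q0 q hreach _
  have qshift : ∀ m s, qseq (m + s) = run δ (wpow u s) (qseq m) := by
    intro m s
    show run δ (wpow u (m + s)) q = _
    rw [wpow_add, run_append]
  have per : ∀ m, qseq (m + k) = qseq m := by
    intro m
    show run δ (wpow u (m + k)) q = run δ (wpow u m) q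
    rw [add_comm m k, wpow_add, run_append, hcyc]
  have perd : ∀ d m, qseq (m + d * k) = qseq m := by
    intro d
    induction d with
    | zero => simp
    | succ n ih =>
      intro m
      have h1 : m + (n + 1) * k = (m + n * k) + k := by ring
      rw [h1, per, ih]
  have qmod : ∀ i, qseq i = qseq (i % k) := by
    intro i
    conv_lhs => rw [show i = i % k + (i / k) * k by rw [Nat.mod_add_div']]
    rw [perd]
  have vfix : ∀ i, run δ v (qseq i) = qseq i := by
    intro i
    have h := hfix (i % k) (Nat.mod_lt i hkpos)
    rw [run_append] at h
    rw [qmod i, ← h]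
  have vpowfix : ∀ m i, run δ (wpow v m) (qseq i) = qseq i := by
    intro m
    induction m with
    | zero => intro i; rfl
    | succ n ih =>
      intro i
      rw [wpow_succ, run_append, ih, vfix]
  have qsucc : ∀ j, qseq (j + 1) = run δ u (qseq j) := by
    intro j
    show run δ (wpow u (j + 1)) q = _
    rw [wpow_succ, run_append]
  have stneq : ∀ m, ¬ StEq δ F (qseq m) (qseq (m + 1)) := by
    intro m hst
    set s := k * (m + 1) - m with hs
    have hms : m + s = k * (m + 1) := by
      have : m + 1 ≤ k * (m + 1) := Nat.le_mul_of_pos_left _ hkpos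
      omega
    have h1 := stEq_run δ F hst (wpow u s)
    rw [← qshift m s, ← qshift (m+1) s] at h1
    have e1 : qseq (m + s) = q := by
      rw [hms, qmod, Nat.mul_mod_right]
      rfl
    have e2 : qseq (m + 1 + s) = run δ u q := by
      have : m + 1 + s = (m + s) + 1 := by omega
      rw [this, qsucc, e1]
    rw [e1, e2] at h1
    exact hne h1
  -- finiteness
  have hfinE : Finite (MinState δ q0 F) := by infer_instance
  have hfinEE : Finite (MinState δ q0 F → MinState δ q0 F) := by infer_instance
  -- length-set periodicity for minDelta
  have hcomp : ∀ (w₁ w₁' w₂ : List A), minDelta δ q0 F w₁ = minDelta δ q0 F w₁' →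
      minDelta δ q0 F (w₁ ++ w₂) = minDelta δ q0 F (w₁' ++ w₂) := by
    intro w₁ w₁' w₂ h
    rw [minDelta_append, minDelta_append, h]
  obtain ⟨T, hTpos, hgood⟩ := lenSet_good (minDelta δ q0 F) hcomp
  obtain ⟨T', rfl⟩ : ∃ T', T = T' + 1 := ⟨T - 1, by omega⟩
  obtain ⟨k', rfl⟩ : ∃ k', k = k' + 1 := ⟨k - 1, by omega⟩
  set t₀ := (k' + 1) * u.length with ht₀
  have ht₀pos : 0 < t₀ := by positivity
  set t := (T' + 1) * t₀ with ht
  have hSS : ∀ m, 0 < m → lenSet (minDelta δ q0 F) (m * t) = lenSet (minDelta δ q0 F) t :=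
    hgood t₀ ht₀pos
  -- the word W
  set W : List A := (u ++ wpow v k') ++ wpow (wpow v (k' + 1)) T' with hW
  have hWlen : W.length = t := by
    rw [hW, List.length_append, List.length_append, wpow_length, wpow_length, wpow_length,
       hlen, ht, ht₀]
    ring
  have bfix : ∀ m i, run δ (wpow (wpow v (k' + 1)) m) (qseq i) = qseq i := by
    intro m
    induction m with
    | zero => intro i; rfl
    | succ n ih =>
      intro i
      rw [wpow_succ, run_append, ih, vpowfix]
  have runW : ∀ i, run δ W (qseq i) = qseq (i + 1) := by
    intro i
    rw [hW, run_append, run_append, ← qsucc, vpowfix, bfix]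
  set h : MinState δ q0 F → MinState δ q0 F := minDelta δ q0 F W with hh
  have mkeq : ∀ (p p' : Q) (hp : Reach δ q0 p) (hp' : Reach δ q0 p'), p = p' →
      (⟦⟨p, hp⟩⟧ : MinState δ q0 F) = ⟦⟨p', hp'⟩⟧ := by
    intro p p' hp hp' hpp
    subst hpp
    rfl
  have hstep : ∀ i, h ⟦⟨qseq i, rq i⟩⟧ = ⟦⟨qseq (i + 1), rq (i + 1)⟩⟧ := by
    intro i
    rw [hh, minDelta_mk]
    exact mkeq _ _ _ _ (runW i)
  have hiter : ∀ m i, h^[m] ⟦⟨qseq i, rq i⟩⟧ = ⟦⟨qseq (i + m), rq (i + m)⟩⟧ := by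
    intro m
    induction m with
    | zero => intro i; rfl
    | succ n ih =>
      intro i
      rw [Function.iterate_succ_apply, hstep, ih]
      exact mkeq _ _ _ _ (by rw [show i + 1 + n = i + (n+1) by omega])
  -- eventual periodicity of h
  obtain ⟨x, y, hxy, hfxy⟩ := Finite.exists_ne_map_eq_of_infinite (fun m => h^[m])
  obtain ⟨p₁, p₂, hab, hfab⟩ : ∃ a b, a < b ∧ h^[a] = h^[b] := by
    rcases Nat.lt_or_ge x y with hl | hl
    · exact ⟨x, y, hl, hfxy⟩
    · exact ⟨y, x, lt_of_le_of_ne hl (Ne.symm hxy), hfxy.symm⟩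
  have hPex : ∃ c, 0 < c ∧ ∃ p, ∀ m, p ≤ m → h^[m + c] = h^[m] := by
    refine ⟨p₂ - p₁, by omega, p₁, iter_per h p₁ (p₂ - p₁) ?_⟩
    rw [show p₁ + (p₂ - p₁) = p₂ by omega]
    exact hfab.symm
  set c := Nat.find hPex with hc
  obtain ⟨hcpos, p, hp⟩ := Nat.find_spec hPex
  rw [← hc] at hcpos hp
  have perEq := iter_eq_of_modeq h p c hp
  have hdvd : ∀ m m', p ≤ m → m ≤ m' → h^[m] = h^[m'] → c ∣ (m' - m) := by
    intro m m' hpm hmm' heq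
    rcases Nat.eq_or_lt_of_le hmm' with rfl | hlt
    · simp
    · obtain ⟨d', rfl⟩ : ∃ d', m' = m + (d' + 1) := ⟨m' - m - 1, by omega⟩
      rw [show m + (d' + 1) - m = d' + 1 by omega]
      set d := d' + 1 with hd
      have hdprop : ∀ s, m ≤ s → h^[s + d] = h^[s] := by
        intro s hs
        obtain ⟨e, rfl⟩ := Nat.exists_eq_add_of_le hs
        have harr : m + e + d = e + (m + d) := by omega
        calc h^[m + e + d] = h^[e] ∘ h^[m + d] := by
              rw [harr, Function.iterate_add]
          _ = h^[e] ∘ h^[m] := by rw [← heq]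
          _ = h^[m + e] := by rw [← Function.iterate_add, Nat.add_comm e m]
      by_contra hndvd
      have hr0 : d % c ≠ 0 := fun h0 => hndvd (Nat.dvd_of_mod_eq_zero h0)
      have hrlt : d % c < c := Nat.mod_lt _ hcpos
      have : 0 < d % c ∧ ∃ p', ∀ s, p' ≤ s → h^[s + d % c] = h^[s] := by
        refine ⟨by omega, max p m, fun s hs => ?_⟩
        have h1 : h^[s + d % c + (d / c) * c] = h^[s + d % c] :=
          iter_perd h p c hp (d / c) (s + d % c) (by omega)
        have h2 : s + d % c + (d / c) * c = s + d := by
          have := Nat.mod_add_div' d c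
          omega
        rw [h2] at h1
        rw [← h1, hdprop s (le_trans (le_max_right p m) hs)]
      exact Nat.find_min hPex (by rw [← hc]; exact hrlt) this
  have hc2 : 2 ≤ c := by
    by_contra hcc
    have hc1 : c = 1 := by omega
    have he : h^[p + 1] = h^[p] := by
      have := hp p le_rfl
      rwa [hc1] at this
    have e1 := congrArg (fun f => f ⟦⟨qseq 0, rq 0⟩⟧) he
    simp only [hiter, Nat.zero_add] at e1
    have e2 := Quotient.exact e1
    exact stneq p (fun w => (e2 w).symm)
  haveI : NeZero c := ⟨by omega⟩
  haveI : Fact (1 < c) := ⟨by omega⟩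
  set n := (p + 1) * c with hn
  have hnp : p ≤ n := by
    have : p + 1 ≤ (p + 1) * c := Nat.le_mul_of_pos_right _ hcpos
    omega
  have hcn : c ∣ n := Dvd.intro_left _ rfl
  have hnpos : 0 < n := by rw [hn]; exact Nat.mul_pos (by omega) hcpos
  obtain ⟨en, hen⟩ := hcn
  refine ⟨t, Multiplicative (ZMod c), inferInstance, inferInstance,
    fun g => h^[n + (Multiplicative.toAdd g).val], ?_, ?_, ?_⟩
  · -- injective
    have key : ∀ b b' : ZMod c, h^[n + b.val] = h^[n + b'.val] → b.val ≤ b'.val → b = b' := by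
      intro b b' heq hle
      have hd := hdvd (n + b.val) (n + b'.val) (by omega) (by omega) heq
      have hsub : (n + b'.val) - (n + b.val) = b'.val - b.val := by omega
      rw [hsub] at hd
      have hlt' : b'.val - b.val < c := lt_of_le_of_lt (Nat.sub_le _ _) (ZMod.val_lt b')
      have : b'.val - b.val = 0 := by
        rcases Nat.eq_zero_or_pos (b'.val - b.val) with h0 | hpos'
        · exact h0
        · exact absurd (Nat.le_of_dvd hpos' hd) (by omega)
      exact ZMod.val_injective c (by omega)
    intro g g' heq
    simp only at heq
    rcases le_total (Multiplicative.toAdd g).val (Multiplicative.toAdd g').val with hle | hle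
    · have := key _ _ heq hle
      exact Multiplicative.toAdd.injective this
    · have := (key _ _ heq.symm hle).symm
      exact Multiplicative.toAdd.injective this
  · -- multiplicative
    intro g g'
    set a := (Multiplicative.toAdd g).val with ha
    set a' := (Multiplicative.toAdd g').val with ha'
    have htoadd : (Multiplicative.toAdd (g * g')).val = (a + a') % c := by
      rw [toAdd_mul, ZMod.val_add]
    show h^[n + (Multiplicative.toAdd (g * g')).val] = h^[n + a] ∘ h^[n + a']
    rw [htoadd, ← Function.iterate_add]
    have hmod : (n + (a + a') % c) % c = ((n + a) + (n + a')) % c := by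
      have h1 : ((n + a) + (n + a')) = c * (en + en) + (a + a') := by rw [hen]; ring
      have h2 : (n + (a + a') % c) = c * en + (a + a') % c := by rw [hen]
      rw [h1, h2, Nat.mul_add_mod, Nat.mul_add_mod, Nat.mod_mod_of_dvd _ dvd_rfl]
    have hle2 : n + (a + a') % c ≤ (n + a) + (n + a') := by
      have := Nat.mod_le (a + a') c
      omega
    exact (perEq _ _ (by omega) hle2 hmod).symm
  · -- words
    intro g
    set m := n + (Multiplicative.toAdd g).val with hm
    have hmpos : 0 < m := by omega
    have hφ : h^[m] = minDelta δ q0 F (wpow W m) := by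
      rw [minDelta_wpow, hh]
    have hmem : minDelta δ q0 F (wpow W m) ∈ lenSet (minDelta δ q0 F) (m * t) := by
      exact ⟨wpow W m, by rw [wpow_length, hWlen], rfl⟩
    rw [hSS m hmpos] at hmem
    obtain ⟨w, hwlen, hw⟩ := hmem
    refine ⟨w, hwlen, ?_⟩
    show h^[m] = minDelta δ q0 F w
    rw [hφ, ← hw]
end Backward

section Forward
variable {Q A : Type} [Fintype Q] [Fintype A]

theorem forward (δ : Q → A → Q) (q0 : Q) (F : Set Q)
    (t : ℕ) (H : Type) (hG : Group H) (hNT : Nontrivial H)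
    (φ : H → (MinState δ q0 F → MinState δ q0 F))
    (hinj : Function.Injective φ)
    (hmul : ∀ g h : H, φ (g * h) = φ g ∘ φ h)
    (hword : ∀ g : H, ∃ w : List A, w.length = t ∧ φ g = minDelta δ q0 F w) :
    ∃ (u v : List A) (q : Q) (k : ℕ),
      Reach δ q0 q ∧ 1 ≤ k ∧ k ≤ Fintype.card Q ∧
      ¬ StEq δ F q (run δ u q) ∧ run δ (wpow u k) q = q ∧
      v.length = u.length ∧
      (∀ i : ℕ, i < k → run δ (wpow u i) q = run δ (wpow u i ++ v) q) := by
  classical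
  choose wd hwlen hwd using hword
  obtain ⟨x, hx⟩ := exists_ne (1 : H)
  -- t ≠ 0
  rcases Nat.eq_zero_or_pos t with ht0 | ht
  · exfalso
    have h1 : wd x = [] := List.length_eq_zero_iff.mp (by rw [hwlen x, ht0])
    have h2 : wd 1 = [] := List.length_eq_zero_iff.mp (by rw [hwlen 1, ht0])
    have : φ x = φ 1 := by rw [hwd x, hwd 1, h1, h2]
    exact hx (hinj this)
  have he_l : ∀ g, φ 1 ∘ φ g = φ g := by
    intro g; rw [← hmul, one_mul]
  have he_iter : ∀ m g, (φ 1)^[m] ∘ φ g = φ g := by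
    intro m
    induction m with
    | zero => intro g; rfl
    | succ nn ih =>
      intro g
      rw [Function.iterate_succ, Function.comp_assoc, he_l, ih]
  -- exact-level length sets
  have hcompR : ∀ (w₁ w₁' w₂ : List A), run δ w₁ = run δ w₁' →
      run δ (w₁ ++ w₂) = run δ (w₁' ++ w₂) := by
    intro w₁ w₁' w₂ hww
    funext p
    rw [run_append, run_append, hww]
  obtain ⟨T, hTpos, hgood⟩ := lenSet_good (run δ) hcompR
  obtain ⟨T', rfl⟩ : ∃ T'', T = T'' + 1 := ⟨T - 1, by omega⟩
  set L := (T' + 1) * t with hL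
  have hRmul : ∀ m, 0 < m → lenSet (run δ) (m * L) = lenSet (run δ) L := hgood t ht
  -- the word W
  set W : List A := wd x ++ wpow (wd 1) T' with hW
  have hWlen : W.length = L := by
    rw [hW, List.length_append, wpow_length, hwlen, hwlen, hL]
    ring
  have hWclass : minDelta δ q0 F W = φ x := by
    rw [hW, minDelta_append, minDelta_wpow, ← hwd, ← hwd, he_iter]
  set G := run δ W with hG'
  have hGpow : ∀ m, run δ (wpow W m) = G^[m] := fun m => run_wpow δ W m
  have hclasspow : ∀ m : ℕ, minDelta δ q0 F (wpow W (m + 1)) = φ (x ^ (m + 1)) := by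
    intro m
    induction m with
    | zero => rw [wpow_one, hWclass, pow_one]
    | succ nn ih =>
      rw [wpow_succ, minDelta_append, ih, hWclass, ← hmul, ← pow_succ']
  -- exact idempotent power of G
  obtain ⟨xx, yy, hxy, hfxy⟩ := Finite.exists_ne_map_eq_of_infinite (fun m => G^[m])
  obtain ⟨p₁, p₂, hab, hfab⟩ : ∃ a b, a < b ∧ G^[a] = G^[b] := by
    rcases Nat.lt_or_ge xx yy with hl | hl
    · exact ⟨xx, yy, hl, hfxy⟩
    · exact ⟨yy, xx, lt_of_le_of_ne hl (Ne.symm hxy), hfxy.symm⟩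
  have perG : ∀ m, p₁ ≤ m → G^[m + (p₂ - p₁)] = G^[m] := by
    refine iter_per G p₁ (p₂ - p₁) ?_
    rw [show p₁ + (p₂ - p₁) = p₂ by omega]
    exact hfab.symm
  set N := (p₁ + 1) * (p₂ - p₁) with hN
  have hNp : p₁ ≤ N := by
    have : p₁ + 1 ≤ (p₁ + 1) * (p₂ - p₁) := Nat.le_mul_of_pos_right _ (by omega)
    omega
  have hN1 : 1 ≤ N := by rw [hN]; exact Nat.mul_pos (by omega) (by omega)
  have hNN : G^[N + N] = G^[N] := by
    conv_lhs => rw [hN]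
    rw [show N + (p₁ + 1) * (p₂ - p₁) = N + (p₁ + 1) * (p₂ - p₁) from rfl]
    exact iter_perd G p₁ (p₂ - p₁) perG (p₁ + 1) N hNp
  -- choose j with x^(N+j) ≠ 1
  obtain ⟨j, hj1, hxj⟩ : ∃ j, 1 ≤ j ∧ x ^ (N + j) ≠ 1 := by
    by_cases hx1 : x ^ (N + 1) = 1
    · refine ⟨2, by omega, ?_⟩
      rw [show N + 2 = (N + 1) + 1 by omega, pow_succ, hx1, one_mul]
      exact hx
    · exact ⟨1, le_rfl, hx1⟩
  have hxx : x ^ (2 * N + j) ≠ x ^ N := by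
    intro he
    apply hxj
    have h1 : x ^ N * x ^ (N + j) = x ^ N * 1 := by
      rw [← pow_add, mul_one]
      rw [show N + (N + j) = 2 * N + j by ring, he]
    exact mul_left_cancel h1
  have hφne : φ (x ^ (2 * N + j)) ≠ φ (x ^ N) := fun he => hxx (hinj he)
  obtain ⟨σ₀, hσ⟩ := Function.ne_iff.mp hφne
  obtain ⟨⟨qs, hqs⟩, hrep⟩ := Quotient.exists_rep σ₀
  have mkeq : ∀ (p p' : Q) (hp : Reach δ q0 p) (hp' : Reach δ q0 p'), p = p' →
      (⟦⟨p, hp⟩⟧ : MinState δ q0 F) = ⟦⟨p', hp'⟩⟧ := by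
    intro p p' hp hp' hpp
    subst hpp
    rfl
  have hreachG : ∀ m, Reach δ q0 (G^[m] qs) := by
    intro m
    have := reach_run δ q0 qs hqs (wpow W m)
    rwa [hGpow] at this
  have hclassAt : ∀ m : ℕ, φ (x ^ (m + 1)) σ₀ = ⟦⟨G^[m + 1] qs, hreachG (m + 1)⟩⟧ := by
    intro m
    rw [← hclasspow, ← hrep, minDelta_mk]
    exact mkeq _ _ _ _ (congrFun (hGpow (m + 1)) qs)
  set q' := G^[N] qs with hq'
  have hq'reach : Reach δ q0 q' := hreachG N
  have hq'fix : G^[N] q' = q' := by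
    rw [hq', ← Function.iterate_add_apply, hNN]
  -- minimal exact period of q' under G
  have hPex : ∃ kk : ℕ, 0 < kk ∧ G^[kk] q' = q' := ⟨N, hN1, hq'fix⟩
  set k₀ := Nat.find hPex with hk₀
  obtain ⟨hk₀pos, hk₀fix⟩ := Nat.find_spec hPex
  rw [← hk₀] at hk₀pos hk₀fix
  have hcycmul : ∀ m, G^[m * k₀] q' = q' := by
    intro m
    induction m with
    | zero => simp
    | succ nn ih =>
      rw [show (nn + 1) * k₀ = k₀ + nn * k₀ by ring, Function.iterate_add_apply, ih, hk₀fix]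
  have hk₀card : k₀ ≤ Fintype.card Q := by
    have aux : ∀ a b : ℕ, a < b → b < k₀ → G^[a] q' ≠ G^[b] q' := by
      intro a b hab' hbk heqq
      have h1 : G^[k₀ - b + a] q' = q' := by
        calc G^[k₀ - b + a] q' = G^[k₀ - b] (G^[a] q') := Function.iterate_add_apply G _ _ _
          _ = G^[k₀ - b] (G^[b] q') := by rw [heqq]
          _ = G^[k₀ - b + b] q' := (Function.iterate_add_apply G _ _ _).symm
          _ = q' := by rw [show k₀ - b + b = k₀ by omega]; exact hk₀fix
      have h2 : 0 < k₀ - b + a ∧ G^[k₀ - b + a] q' = q' := ⟨by omega, h1⟩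
      exact Nat.find_min hPex (by omega) h2
    have hinj2 : Function.Injective (fun i : Fin k₀ => G^[i.1] q') := by
      intro i i' hii
      rcases lt_trichotomy i.1 i'.1 with hlt | heq2 | hlt
      · exact absurd hii (aux i.1 i'.1 hlt i'.2)
      · exact Fin.ext heq2
      · exact absurd hii.symm (aux i'.1 i.1 hlt i.2)
    calc k₀ = Fintype.card (Fin k₀) := (Fintype.card_fin k₀).symm
      _ ≤ Fintype.card Q := Fintype.card_le_of_injective _ hinj2
  -- extract equal-length words for G^[N+j] and G^[N]
  have hmemB : G^[N + j] ∈ lenSet (run δ) ((N + j) * L) :=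
    ⟨wpow W (N + j), by rw [wpow_length, hWlen], hGpow (N + j)⟩
  rw [hRmul (N + j) (by omega)] at hmemB
  obtain ⟨uu, huulen, huu⟩ := hmemB
  have hmemE : G^[N] ∈ lenSet (run δ) (N * L) :=
    ⟨wpow W N, by rw [wpow_length, hWlen], hGpow N⟩
  rw [hRmul N (by omega)] at hmemE
  obtain ⟨vv, hvvlen, hvv⟩ := hmemE
  -- run computations
  have hrun_uu_pow : ∀ i, run δ (wpow uu i) q' = G^[(N + j) * i] q' := by
    intro i
    rw [run_wpow, huu, ← Function.iterate_mul]
  refine ⟨uu, vv, q', k₀, hq'reach, hk₀pos, hk₀card, ?_, ?_, ?_, ?_⟩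
  · -- ¬ StEq
    intro hst
    apply hσ
    obtain ⟨N', hN'⟩ : ∃ N', N = N' + 1 := ⟨N - 1, by omega⟩
    obtain ⟨M', hM'⟩ : ∃ M', 2 * N + j = M' + 1 := ⟨2 * N + j - 1, by omega⟩
    have e1 : φ (x ^ N) σ₀ = ⟦⟨q', hq'reach⟩⟧ := by
      rw [hN', hclassAt N']
      exact mkeq _ _ _ _ (by rw [← hN', ← hq'])
    have e2 : φ (x ^ (2 * N + j)) σ₀ = ⟦⟨run δ uu q', reach_run δ q0 q' hq'reach uu⟩⟧ := by
      rw [hM', hclassAt M']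
      refine mkeq _ _ _ _ ?_
      have : run δ uu q' = G^[2 * N + j] qs := by
        rw [huu, hq', ← Function.iterate_add_apply]
        congr 1
        omega
      rw [this, ← hM']
    have e3 : (⟦⟨q', hq'reach⟩⟧ : MinState δ q0 F) =
        ⟦⟨run δ uu q', reach_run δ q0 q' hq'reach uu⟩⟧ :=
      Quotient.sound hst
    rw [e1, e2, ← e3]
  · -- cycle
    rw [hrun_uu_pow k₀]
    exact hcycmul (N + j)
  · -- lengths
    rw [huulen, hvvlen]
  · -- v fixes the cycle
    intro i hik
    rw [run_append, hrun_uu_pow i, hvv]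
    have h1 : ∀ y : Q, G^[N] (G^[(N + j) * i] y) = G^[(N + j) * i] (G^[N] y) := by
      intro y
      rw [← Function.iterate_add_apply, ← Function.iterate_add_apply, Nat.add_comm]
    rw [h1, hq'fix]
end Forward

/-- There is a `t ≥ 0` such that `{δ̃_w : |w| = t}` (the image of `Σ^t`
under the syntactic morphism) contains a nontrivial group iff there exist words `u, v`,
a reachable state `q` and `1 ≤ k ≤ |Q|` with `q ≁ δ_u(q)`, `δ_{u^k}(q) = q`, `|v| = |u|`,
and `δ_{u^i}(q) = δ_{u^i v}(q)` for every `i < k`. -/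
theorem stmt1 {Q A : Type} [Fintype Q] [Fintype A]
    (δ : Q → A → Q) (q0 : Q) (F : Set Q) :
    (∃ t : ℕ, ∃ (H : Type) (_ : Group H), Nontrivial H ∧
      ∃ φ : H → (MinState δ q0 F → MinState δ q0 F),
        Function.Injective φ ∧
        (∀ g h : H, φ (g * h) = φ g ∘ φ h) ∧
        (∀ g : H, ∃ w : List A, w.length = t ∧ φ g = minDelta δ q0 F w)) ↔
    (∃ (u v : List A) (q : Q) (k : ℕ),
      Reach δ q0 q ∧ 1 ≤ k ∧ k ≤ Fintype.card Q ∧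
      ¬ StEq δ F q (run δ u q) ∧ run δ (wpow u k) q = q ∧
      v.length = u.length ∧
      (∀ i : ℕ, i < k → run δ (wpow u i) q = run δ (wpow u i ++ v) q)) := by
  constructor
  · rintro ⟨t, H, hG, hNT, φ, hinj, hmul, hword⟩
    exact forward δ q0 F t H hG hNT φ hinj hmul hword
  · rintro ⟨u, v, q, k, hreach, hk1, hkcard, hne, hcyc, hlen, hfixx⟩
    exact backward δ q0 F u v q k hreach hk1 hne hcyc hlen hfixx
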